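/- Let G : Ω → Δ^m be a fixed function taking values in the m-dimensional probability simplex, and for j = 1,...,m let F_j be classes of real-valued functions on Ω each containing the zero function. Then the empirical Rademacher complexity of the class F_G = { x ↦ Σ_{j=1}^m G(x)_j f_j(x) : f_j ∈ F_j } on any sample S ⊆ Ω satisfies Rad(F_G; S) ≤ Σ_{j=1}^m (sup_{x ∈ S} |G(x)_j|) · Rad(F_j; S). -/

import Mathlib

open Finset

/-- Empirical Rademacher complexity of a class `H` of real-valued functions
on the sample `x : Fin n → X`, as an average over all sign assignments. -/
noncomputable def rad {X : Type*} {n : ℕ} (x : Fin n → X) (H : Set (X → ℝ)) : ℝ :=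
  (∑ ε : Fin n → Bool,
    sSup ((fun h => (∑ i, (if ε i then (1 : ℝ) else -1) * h (x i)) / n) '' H)) / 2 ^ n

namespace RadAux

variable {X : Type*} {n : ℕ}

/-- image of class under weighted signed sum -/
noncomputable def simg (x : Fin n → X) (F : Set (X → ℝ)) (ε : Fin n → Bool)
    (a : Fin n → ℝ) : Set ℝ :=
  (fun h => (∑ i, (if ε i then (1 : ℝ) else -1) * (a i * h (x i))) / n) '' F

noncomputable def Rw (x : Fin n → X) (F : Set (X → ℝ)) (a : Fin n → ℝ) : ℝ :=
  (∑ ε : Fin n → Bool, sSup (simg x F ε a)) / 2 ^ n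

lemma zero_step (x : Fin n → X) (F : Set (X → ℝ)) (hne : F.Nonempty)
    (a : Fin n → ℝ) (k : Fin n) (hbd : ∀ ε, BddAbove (simg x F ε a)) :
    (∀ ε, BddAbove (simg x F ε (Function.update a k 0))) ∧
      Rw x F (Function.update a k 0) ≤ Rw x F a := by
  classical
  have key : ∀ ε : Fin n → Bool, ∀ v ∈ simg x F ε (Function.update a k 0),
      v ≤ (sSup (simg x F ε a) + sSup (simg x F (Function.update ε k (!ε k)) a)) / 2 := by
    rintro ε v ⟨h, hh, rfl⟩
    show (∑ i, (if ε i then (1:ℝ) else -1) * (Function.update a k 0 i * h (x i))) / n ≤ _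
    have hsum : (∑ i, (if ε i then (1:ℝ) else -1) * (Function.update a k 0 i * h (x i)))
        = ((∑ i, (if ε i then (1:ℝ) else -1) * (a i * h (x i)))
          + (∑ i, (if Function.update ε k (!ε k) i then (1:ℝ) else -1) * (a i * h (x i)))) / 2 := by
      rw [← Finset.sum_add_distrib, Finset.sum_div]
      refine Finset.sum_congr rfl fun i _ => ?_
      by_cases hik : i = k
      · subst hik
        rw [Function.update_self, Function.update_self]
        cases hb : ε i <;> simp [hb]
      · rw [Function.update_of_ne hik, Function.update_of_ne hik]
        ring
    have hv : (∑ i, (if ε i then (1:ℝ) else -1) * (Function.update a k 0 i * h (x i))) / n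
        = ((∑ i, (if ε i then (1:ℝ) else -1) * (a i * h (x i))) / n
          + (∑ i, (if Function.update ε k (!ε k) i then (1:ℝ) else -1) * (a i * h (x i))) / n) / 2 := by
      rw [hsum]; ring
    rw [hv]
    have h1 : (∑ i, (if ε i then (1:ℝ) else -1) * (a i * h (x i))) / n
        ≤ sSup (simg x F ε a) := le_csSup (hbd ε) ⟨h, hh, rfl⟩
    have h2 : (∑ i, (if Function.update ε k (!ε k) i then (1:ℝ) else -1) * (a i * h (x i))) / n
        ≤ sSup (simg x F (Function.update ε k (!ε k)) a) := le_csSup (hbd _) ⟨h, hh, rfl⟩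
    linarith
  have hbd0 : ∀ ε, BddAbove (simg x F ε (Function.update a k 0)) := fun ε =>
    ⟨_, fun v hv => key ε v hv⟩
  refine ⟨hbd0, ?_⟩
  have hinv : Function.Involutive (fun ε : Fin n → Bool => Function.update ε k (!ε k)) := by
    intro ε
    funext i
    by_cases hik : i = k
    · subst hik; simp [Function.update_self]
    · simp [Function.update_of_ne hik]
  have hflip : ∑ ε : Fin n → Bool, sSup (simg x F (Function.update ε k (!ε k)) a)
      = ∑ ε : Fin n → Bool, sSup (simg x F ε a) :=
    Equiv.sum_comp hinv.toPerm (fun ε => sSup (simg x F ε a))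
  have hsum : ∑ ε : Fin n → Bool, sSup (simg x F ε (Function.update a k 0))
      ≤ ∑ ε : Fin n → Bool, sSup (simg x F ε a) := by
    calc ∑ ε : Fin n → Bool, sSup (simg x F ε (Function.update a k 0))
        ≤ ∑ ε : Fin n → Bool,
            (sSup (simg x F ε a) + sSup (simg x F (Function.update ε k (!ε k)) a)) / 2 :=
          Finset.sum_le_sum fun ε _ => csSup_le (hne.image _) (key ε)
      _ = ((∑ ε : Fin n → Bool, sSup (simg x F ε a))
            + ∑ ε : Fin n → Bool, sSup (simg x F (Function.update ε k (!ε k)) a)) / 2 := by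
          rw [← Finset.sum_add_distrib, Finset.sum_div]
      _ = ∑ ε : Fin n → Bool, sSup (simg x F ε a) := by rw [hflip]; ring
  unfold Rw
  gcongr

lemma convex_step (x : Fin n → X) (F : Set (X → ℝ)) (hne : F.Nonempty)
    (a : Fin n → ℝ) (k : Fin n) (c t : ℝ) (ht0 : 0 ≤ t) (ht1 : t ≤ 1)
    (ε : Fin n → Bool) (hb1 : BddAbove (simg x F ε (Function.update a k c)))
    (hb0 : BddAbove (simg x F ε (Function.update a k 0))) :
    BddAbove (simg x F ε (Function.update a k (t * c))) ∧
    sSup (simg x F ε (Function.update a k (t * c))) ≤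
      t * sSup (simg x F ε (Function.update a k c))
        + (1 - t) * sSup (simg x F ε (Function.update a k 0)) := by
  classical
  have key : ∀ v ∈ simg x F ε (Function.update a k (t * c)),
      v ≤ t * sSup (simg x F ε (Function.update a k c))
        + (1 - t) * sSup (simg x F ε (Function.update a k 0)) := by
    rintro v ⟨h, hh, rfl⟩
    show (∑ i, (if ε i then (1:ℝ) else -1) * (Function.update a k (t * c) i * h (x i))) / n ≤ _
    have hsum : (∑ i, (if ε i then (1:ℝ) else -1) * (Function.update a k (t * c) i * h (x i)))
        = t * (∑ i, (if ε i then (1:ℝ) else -1) * (Function.update a k c i * h (x i)))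
          + (1 - t) * (∑ i, (if ε i then (1:ℝ) else -1) * (Function.update a k 0 i * h (x i))) := by
      rw [Finset.mul_sum, Finset.mul_sum, ← Finset.sum_add_distrib]
      refine Finset.sum_congr rfl fun i _ => ?_
      by_cases hik : i = k
      · subst hik
        rw [Function.update_self, Function.update_self, Function.update_self]
        ring
      · rw [Function.update_of_ne hik, Function.update_of_ne hik, Function.update_of_ne hik]
        ring
    have hv : (∑ i, (if ε i then (1:ℝ) else -1) * (Function.update a k (t * c) i * h (x i))) / n
        = t * ((∑ i, (if ε i then (1:ℝ) else -1) * (Function.update a k c i * h (x i))) / n)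
          + (1 - t) * ((∑ i, (if ε i then (1:ℝ) else -1) * (Function.update a k 0 i * h (x i))) / n) := by
      rw [hsum]; ring
    rw [hv]
    have h1 := le_csSup hb1 (⟨h, hh, rfl⟩ :
      (∑ i, (if ε i then (1:ℝ) else -1) * (Function.update a k c i * h (x i))) / n
        ∈ simg x F ε (Function.update a k c))
    have h0 := le_csSup hb0 (⟨h, hh, rfl⟩ :
      (∑ i, (if ε i then (1:ℝ) else -1) * (Function.update a k 0 i * h (x i))) / n
        ∈ simg x F ε (Function.update a k 0))
    have := mul_le_mul_of_nonneg_left h1 ht0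
    have := mul_le_mul_of_nonneg_left h0 (by linarith : (0:ℝ) ≤ 1 - t)
    linarith
  exact ⟨⟨_, fun v hv => key v hv⟩, csSup_le (hne.image _) key⟩

lemma Qlem (x : Fin n → X) (F : Set (X → ℝ)) (h0 : (fun _ => (0:ℝ)) ∈ F)
    (c : ℝ) (hc : 0 ≤ c)
    (hbd : ∀ ε : Fin n → Bool,
      BddAbove ((fun h => (∑ i, (if ε i then (1:ℝ) else -1) * h (x i)) / n) '' F)) :
    ∀ T : Finset (Fin n), ∀ a : Fin n → ℝ,
      (∀ i, a i = c ∨ a i = 0) → (∀ i ∉ T, a i = c) →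
      (∀ ε, BddAbove (simg x F ε a)) ∧ Rw x F a ≤ c * rad x F := by
  classical
  have hne : F.Nonempty := ⟨_, h0⟩
  intro T
  induction T using Finset.induction with
  | empty =>
    intro a _ hU
    have ha : a = fun _ => c := funext fun i => hU i (by simp)
    subst ha
    have key : ∀ ε : Fin n → Bool, ∀ v ∈ simg x F ε (fun _ => c),
        v ≤ c * sSup ((fun h => (∑ i, (if ε i then (1:ℝ) else -1) * h (x i)) / n) '' F) := by
      rintro ε v ⟨h, hh, rfl⟩
      show (∑ i, (if ε i then (1:ℝ) else -1) * (c * h (x i))) / n ≤ _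
      have hs : (∑ i, (if ε i then (1:ℝ) else -1) * (c * h (x i)))
          = c * ∑ i, (if ε i then (1:ℝ) else -1) * h (x i) := by
        rw [Finset.mul_sum]
        exact Finset.sum_congr rfl fun i _ => by ring
      rw [hs, mul_div_assoc]
      exact mul_le_mul_of_nonneg_left (le_csSup (hbd ε) ⟨h, hh, rfl⟩) hc
    refine ⟨fun ε => ⟨_, fun v hv => key ε v hv⟩, ?_⟩
    have hsum : ∑ ε : Fin n → Bool, sSup (simg x F ε (fun _ => c))
        ≤ c * ∑ ε : Fin n → Bool,
            sSup ((fun h => (∑ i, (if ε i then (1:ℝ) else -1) * h (x i)) / n) '' F) := by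
      rw [Finset.mul_sum]
      exact Finset.sum_le_sum fun ε _ => csSup_le (hne.image _) (key ε)
    unfold Rw rad
    rw [← mul_div_assoc]
    gcongr
  | @insert k T' hk IH =>
    intro a hcz hU
    by_cases hak : a k = c
    · refine IH a hcz fun i hi => ?_
      by_cases hik : i = k
      · subst hik; exact hak
      · exact hU i (by simp [Finset.mem_insert, hik, hi])
    · have hak0 : a k = 0 := (hcz k).resolve_left hak
      have h1 : ∀ i, Function.update a k c i = c ∨ Function.update a k c i = 0 := fun i => by
        by_cases hik : i = k
        · subst hik; left; rw [Function.update_self]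
        · rw [Function.update_of_ne hik]; exact hcz i
      have h2 : ∀ i ∉ T', Function.update a k c i = c := fun i hi => by
        by_cases hik : i = k
        · subst hik; rw [Function.update_self]
        · rw [Function.update_of_ne hik]
          exact hU i (by simp [Finset.mem_insert, hik, hi])
      obtain ⟨hbd', hR'⟩ := IH (Function.update a k c) h1 h2
      have haa : a = Function.update (Function.update a k c) k 0 := by
        funext i
        by_cases hik : i = k
        · subst hik; rw [Function.update_self, hak0]
        · rw [Function.update_of_ne hik, Function.update_of_ne hik]
      obtain ⟨hb, hR⟩ := zero_step x F hne (Function.update a k c) k hbd'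
      rw [haa]
      exact ⟨hb, le_trans hR hR'⟩

lemma Plem (x : Fin n → X) (F : Set (X → ℝ)) (h0 : (fun _ => (0:ℝ)) ∈ F)
    (c : ℝ) (hc : 0 ≤ c)
    (hbd : ∀ ε : Fin n → Bool,
      BddAbove ((fun h => (∑ i, (if ε i then (1:ℝ) else -1) * h (x i)) / n) '' F)) :
    ∀ T : Finset (Fin n), ∀ a : Fin n → ℝ,
      (∀ i, 0 ≤ a i ∧ a i ≤ c) → (∀ i ∉ T, a i = c ∨ a i = 0) →
      (∀ ε, BddAbove (simg x F ε a)) ∧ Rw x F a ≤ c * rad x F := by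
  classical
  have hne : F.Nonempty := ⟨_, h0⟩
  intro T
  induction T using Finset.induction with
  | empty =>
    intro a _ hU
    exact Qlem x F h0 c hc hbd Finset.univ a (fun i => hU i (by simp))
      (fun i hi => absurd (Finset.mem_univ i) hi)
  | @insert k T' hk IH =>
    intro a ha hU
    rcases eq_or_lt_of_le hc with hc0 | hcpos
    · have hz : ∀ i, a i = c ∨ a i = 0 := fun i =>
        Or.inr (le_antisymm (by rw [hc0]; exact (ha i).2) (ha i).1)
      exact Qlem x F h0 c hc hbd Finset.univ a hz (fun i hi => absurd (Finset.mem_univ i) hi)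
    · have hcond : ∀ b : ℝ, (0 ≤ b ∧ b ≤ c) →
          (∀ i, 0 ≤ Function.update a k b i ∧ Function.update a k b i ≤ c) := by
        intro b hb i
        by_cases hik : i = k
        · subst hik; rw [Function.update_self]; exact hb
        · rw [Function.update_of_ne hik]; exact ha i
      have hT1 : ∀ i ∉ T', Function.update a k c i = c ∨ Function.update a k c i = 0 :=
        fun i hi => by
          by_cases hik : i = k
          · subst hik; left; rw [Function.update_self]
          · rw [Function.update_of_ne hik]
            exact hU i (by simp [Finset.mem_insert, hik, hi])
      have hT0 : ∀ i ∉ T', Function.update a k 0 i = c ∨ Function.update a k 0 i = 0 :=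
        fun i hi => by
          by_cases hik : i = k
          · subst hik; right; rw [Function.update_self]
          · rw [Function.update_of_ne hik]
            exact hU i (by simp [Finset.mem_insert, hik, hi])
      obtain ⟨hb1, hR1⟩ := IH (Function.update a k c) (hcond c ⟨hc, le_refl c⟩) hT1
      obtain ⟨hb0, hR0⟩ := IH (Function.update a k 0) (hcond 0 ⟨le_refl 0, hc⟩) hT0
      have ht0 : 0 ≤ a k / c := div_nonneg (ha k).1 hc
      have ht1 : a k / c ≤ 1 := (div_le_one hcpos).2 (ha k).2
      have haa : a = Function.update a k (a k / c * c) := by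
        funext i
        by_cases hik : i = k
        · subst hik; rw [Function.update_self, div_mul_cancel₀ _ (ne_of_gt hcpos)]
        · rw [Function.update_of_ne hik]
      have hcs := fun ε => convex_step x F hne a k c (a k / c) ht0 ht1 ε (hb1 ε) (hb0 ε)
      constructor
      · intro ε
        rw [haa]
        exact (hcs ε).1
      · have hRa : Rw x F a ≤ (a k / c) * Rw x F (Function.update a k c)
            + (1 - a k / c) * Rw x F (Function.update a k 0) := by
          conv_lhs => rw [haa]
          unfold Rw
          rw [← mul_div_assoc, ← mul_div_assoc, ← add_div, Finset.mul_sum, Finset.mul_sum,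
            ← Finset.sum_add_distrib]
          have hstep : ∑ ε : Fin n → Bool, sSup (simg x F ε (Function.update a k (a k / c * c)))
              ≤ ∑ ε : Fin n → Bool, ((a k / c) * sSup (simg x F ε (Function.update a k c))
                + (1 - a k / c) * sSup (simg x F ε (Function.update a k 0))) :=
            Finset.sum_le_sum fun ε _ => (hcs ε).2
          gcongr
        calc Rw x F a ≤ (a k / c) * Rw x F (Function.update a k c)
              + (1 - a k / c) * Rw x F (Function.update a k 0) := hRa
          _ ≤ (a k / c) * (c * rad x F) + (1 - a k / c) * (c * rad x F) := by
              have hm1 := mul_le_mul_of_nonneg_left hR1 ht0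
              have hm0 := mul_le_mul_of_nonneg_left hR0 (by linarith : (0:ℝ) ≤ 1 - a k / c)
              linarith
          _ = c * rad x F := by ring

end RadAux

theorem rad_gated_class_le {X : Type*} {n m : ℕ} (x : Fin n → X)
    (G : X → Fin m → ℝ)
    (hGnn : ∀ y : X, ∀ j, 0 ≤ G y j) (hGsum : ∀ y : X, ∑ j, G y j = 1)
    (Fs : Fin m → Set (X → ℝ)) (hzero : ∀ j, (fun _ => (0 : ℝ)) ∈ Fs j)
    (hbd : ∀ j, ∀ ε : Fin n → Bool,
      BddAbove ((fun h => (∑ i, (if ε i then (1 : ℝ) else -1) * h (x i)) / n) '' (Fs j))) :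
    rad x {u | ∃ f : Fin m → (X → ℝ), (∀ j, f j ∈ Fs j) ∧
        u = fun y => ∑ j, G y j * f j y} ≤
      ∑ j, (⨆ i : Fin n, |G (x i) j|) * rad x (Fs j) := by
  classical
  set c : Fin m → ℝ := fun j => ⨆ i : Fin n, |G (x i) j| with hcdef
  have hc : ∀ j, 0 ≤ c j := fun j => Real.iSup_nonneg fun i => abs_nonneg _
  have hac : ∀ j i, G (x i) j ≤ c j := fun j i =>
    le_trans (le_abs_self _) (le_ciSup (f := fun i : Fin n => |G (x i) j|) (Set.Finite.bddAbove (Set.finite_range _)) i)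
  have hmain := fun j => RadAux.Plem x (Fs j) (hzero j) (c j) (hc j) (hbd j) Finset.univ
      (fun i => G (x i) j) (fun i => ⟨hGnn _ _, hac j i⟩)
      (fun i hi => absurd (Finset.mem_univ i) hi)
  have hbdj : ∀ j, ∀ ε : Fin n → Bool,
      BddAbove (RadAux.simg x (Fs j) ε (fun i => G (x i) j)) := fun j => (hmain j).1
  -- pointwise bound on the gated class sup
  set Fg : Set (X → ℝ) := {u | ∃ f : Fin m → (X → ℝ), (∀ j, f j ∈ Fs j) ∧
      u = fun y => ∑ j, G y j * f j y} with hFg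
  have hFgne : Fg.Nonempty := ⟨_, ⟨fun _ => fun _ => 0, fun j => hzero j, rfl⟩⟩
  have key : ∀ ε : Fin n → Bool,
      sSup ((fun h => (∑ i, (if ε i then (1:ℝ) else -1) * h (x i)) / n) '' Fg)
        ≤ ∑ j, sSup (RadAux.simg x (Fs j) ε (fun i => G (x i) j)) := by
    intro ε
    refine csSup_le (hFgne.image _) ?_
    rintro v ⟨u, ⟨f, hf, rfl⟩, rfl⟩
    show (∑ i, (if ε i then (1:ℝ) else -1) * (∑ j, G (x i) j * f j (x i))) / n ≤ _
    have hv : (∑ i, (if ε i then (1:ℝ) else -1) * (∑ j, G (x i) j * f j (x i))) / n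
        = ∑ j, (∑ i, (if ε i then (1:ℝ) else -1) * (G (x i) j * f j (x i))) / n := by
      rw [← Finset.sum_div]
      congr 1
      rw [Finset.sum_comm]
      exact Finset.sum_congr rfl fun i _ => Finset.mul_sum _ _ _
    rw [hv]
    exact Finset.sum_le_sum fun j _ => le_csSup (hbdj j ε) ⟨f j, hf j, rfl⟩
  calc rad x Fg
      = (∑ ε : Fin n → Bool,
          sSup ((fun h => (∑ i, (if ε i then (1:ℝ) else -1) * h (x i)) / n) '' Fg)) / 2 ^ n := rfl
    _ ≤ (∑ ε : Fin n → Bool,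
          ∑ j, sSup (RadAux.simg x (Fs j) ε (fun i => G (x i) j))) / 2 ^ n := by
        have hstep : (∑ ε : Fin n → Bool,
            sSup ((fun h => (∑ i, (if ε i then (1:ℝ) else -1) * h (x i)) / n) '' Fg))
            ≤ ∑ ε : Fin n → Bool, ∑ j, sSup (RadAux.simg x (Fs j) ε (fun i => G (x i) j)) :=
          Finset.sum_le_sum fun ε _ => key ε
        gcongr
    _ = ∑ j, RadAux.Rw x (Fs j) (fun i => G (x i) j) := by
        rw [Finset.sum_comm, Finset.sum_div]
        rfl
    _ ≤ ∑ j, c j * rad x (Fs j) := Finset.sum_le_sum fun j _ => (hmain j).2
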